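/- Let ℓ ∈ [0,1), φ ∈ H^ℓ(ℝ), and let f : [0,∞) → L²(ℝ) be continuous with sup_{t≥0} ‖f(t)‖_{L²} < ∞. Define v(t) := e^{−t} φ + ∫_0^t e^{−(t−s)} (I−∂ₓₓ)⁻¹ f(s) ds. Then for every T > 0 there is a constant C_T > 0 (independent of φ, f and of the base point τ) such that for every τ ≥ 0: ‖v‖_{Y^ℓ_{τ,T}} ≤ C_T ( ‖φ‖_{H^ℓ} + sup_{t≥0} ‖f(t)‖_{L²} ). -/

import Mathlib

noncomputable section

open MeasureTheory Real Set Filter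
open scoped ENNReal NNReal Convolution ComplexConjugate

/-- Frequency-side state space `L²(ℝ, ℂ)`: an element represents the Fourier–Plancherel
transform `ĝ` of a function `g ∈ L²(ℝ)` (unitary normalization, so that Plancherel is an
isometry and `(uv)^ = û ⋆ v̂`). -/
abbrev V : Type := Lp ℂ 2 (volume : Measure ℝ)

/-- The I-method multiplier `m_N(ξ) = min (1, (|ξ|/N)^{ℓ-1})`, with `m_N 0 = 1`. -/
def mN (ℓ N ξ : ℝ) : ℝ := if ξ = 0 then 1 else min 1 ((|ξ| / N) ^ (ℓ - 1))

/-- The `H^s` norm, frequency side: `(∫ (1+ξ²)^s |ĝ(ξ)|² dξ)^{1/2}`. -/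
def HsE (s : ℝ) (G : ℝ → ℂ) : ℝ≥0∞ :=
  (∫⁻ ξ : ℝ, ENNReal.ofReal ((1 + ξ ^ 2) ^ s) * (‖G ξ‖₊ : ℝ≥0∞) ^ 2) ^ (1 / 2 : ℝ)

/-- The `H^s` norm as a real number. -/
def Hr (s : ℝ) (G : ℝ → ℂ) : ℝ := (HsE s G).toReal

/-- Membership in `H^s`, frequency side. -/
def MemHs (s : ℝ) (G : ℝ → ℂ) : Prop :=
  AEStronglyMeasurable G volume ∧ HsE s G < ⊤

/-- Applying the operator `I_N`, frequency side. -/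
def IN (ℓ N : ℝ) (G : ℝ → ℂ) : ℝ → ℂ := fun ξ => (mN ℓ N ξ : ℂ) * G ξ

/-- The `Y^s_{τ,T}` norm of a curve of (frequency-side) functions. -/
def YE (s τ T : ℝ) (u : ℝ → ℝ → ℂ) : ℝ≥0∞ :=
  (⨆ t ∈ Icc τ (τ + T), HsE s (u t)) +
    (∫⁻ t in Icc τ (τ + T), HsE s (u t) ^ 2) ^ (1 / 2 : ℝ)

/-- Continuity of a curve in the `H^s` norm. -/
def HContOn (s : ℝ) (Q : ℝ → V) (A : Set ℝ) : Prop :=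
  ∀ t ∈ A, ∀ ε : ℝ≥0∞, 0 < ε → ∃ δ > (0 : ℝ), ∀ t' ∈ A, |t' - t| < δ →
    HsE s ((Q t' - Q t : V) : ℝ → ℂ) < ε

/-- Frequency side of the product of two `L²` functions: `(uv)^ = û ⋆ v̂`. -/
def prodHat (U W : ℝ → ℂ) : ℝ → ℂ :=
  convolution U W (ContinuousLinearMap.mul ℂ ℂ) volume

lemma memLp_resolventFun (g : V) :
    MemLp (fun ξ : ℝ => (((1 + ξ ^ 2)⁻¹ : ℝ) : ℂ) * (g : ℝ → ℂ) ξ) 2 (volume : Measure ℝ) := by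
  refine (Lp.memLp g).of_le ?_ ?_
  · exact (Complex.continuous_ofReal.comp ((continuous_const.add (continuous_pow 2)).inv₀ (fun ξ : ℝ => (by positivity : (1 : ℝ) + ξ ^ 2 ≠ 0)))).aestronglyMeasurable.mul
      (Lp.aestronglyMeasurable g)
  · filter_upwards with ξ
    have h0 : (0 : ℝ) < 1 + ξ ^ 2 := by positivity
    have h1 : ‖(((1 + ξ ^ 2)⁻¹ : ℝ) : ℂ)‖ ≤ 1 := by
      rw [Complex.norm_real, Real.norm_eq_abs, abs_of_pos (by positivity)]
      rw [inv_le_one_iff₀]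
      right; nlinarith
    calc ‖(((1 + ξ ^ 2)⁻¹ : ℝ) : ℂ) * (g : ℝ → ℂ) ξ‖
        = ‖(((1 + ξ ^ 2)⁻¹ : ℝ) : ℂ)‖ * ‖(g : ℝ → ℂ) ξ‖ := norm_mul _ _
      _ ≤ 1 * ‖(g : ℝ → ℂ) ξ‖ := by gcongr
      _ = ‖(g : ℝ → ℂ) ξ‖ := one_mul _

/-- The resolvent `(I − ∂ₓₓ)⁻¹`, frequency side, as a map `L² → L²`. -/
def resolv (g : V) : V := MemLp.toLp _ (memLp_resolventFun g)

/-- Frequency side of `(I − ∂ₓₓ)⁻¹ ∂ₓ (u²)`. -/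
def NLterm (g : V) : ℝ → ℂ := fun ξ =>
  Complex.I * ξ * (((1 + ξ ^ 2)⁻¹ : ℝ) : ℂ) * prodHat (g : ℝ → ℂ) (g : ℝ → ℂ) ξ

/-- `U` is (the frequency side of) a global mild solution of the forced damped BBM equation
`u_t − u_{xxt} + u − u_{xx} + u u_x = f` with initial data `Φ` and force `F`. -/
def IsGlobalMildSolution (ℓ : ℝ) (F : ℝ → V) (Φ : V) (U : ℝ → V) : Prop :=
  HContOn ℓ U (Ici 0) ∧ U 0 = Φ ∧
  ∃ W : ℝ → V,
    (∀ s : ℝ, (W s : ℝ → ℂ) =ᵐ[volume] NLterm (U s)) ∧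
    ∀ t ≥ (0 : ℝ), U t = Real.exp (-t) • Φ +
      ∫ s in (0 : ℝ)..t, Real.exp (-(t - s)) • (resolv (F s) - (2⁻¹ : ℝ) • W s)

/-- `U` is (the frequency side of) a mild solution on `[0, T]`. -/
def IsMildSolutionOn (ℓ T : ℝ) (F : ℝ → V) (Φ : V) (U : ℝ → V) : Prop :=
  HContOn ℓ U (Icc 0 T) ∧ U 0 = Φ ∧
  ∃ W : ℝ → V,
    (∀ s : ℝ, (W s : ℝ → ℂ) =ᵐ[volume] NLterm (U s)) ∧
    ∀ t ∈ Icc (0 : ℝ) T, U t = Real.exp (-t) • Φ +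
      ∫ s in (0 : ℝ)..t, Real.exp (-(t - s)) • (resolv (F s) - (2⁻¹ : ℝ) • W s)

/-- Frequency side of `(I − ∂ₓₓ)⁻¹ I_N ∂ₓ (½q² + qv + ½v²)`. -/
def NL2 (ℓ N : ℝ) (q v : V) : ℝ → ℂ := fun ξ =>
  Complex.I * ξ * (mN ℓ N ξ : ℂ) * (((1 + ξ ^ 2)⁻¹ : ℝ) : ℂ) *
    ((2⁻¹ : ℂ) * prodHat (q : ℝ → ℂ) (q : ℝ → ℂ) ξ +
      prodHat (q : ℝ → ℂ) (v : ℝ → ℂ) ξ +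
      (2⁻¹ : ℂ) * prodHat (v : ℝ → ℂ) (v : ℝ → ℂ) ξ)

lemma HsE_congr {s : ℝ} {G H : ℝ → ℂ} (h : G =ᵐ[volume] H) : HsE s G = HsE s H := by
  unfold HsE
  congr 1
  refine lintegral_congr_ae ?_
  filter_upwards [h] with ξ hξ
  rw [hξ]

lemma HsE_eq (s : ℝ) (G : ℝ → ℂ) :
    HsE s G = eLpNorm (fun ξ => (((1 + ξ ^ 2) ^ (s / 2) : ℝ) : ℂ) * G ξ) 2 volume := by
  rw [eLpNorm_eq_lintegral_rpow_enorm_toReal (by norm_num) (by norm_num)]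
  unfold HsE
  norm_num
  congr 1
  refine lintegral_congr fun ξ => ?_
  have h0 : (0:ℝ) ≤ 1 + ξ ^ 2 := by positivity
  have h1 : (0:ℝ) ≤ (1 + ξ ^ 2) ^ (s / 2) := Real.rpow_nonneg h0 _
  rw [mul_pow]
  congr 1
  have : ‖((((1 + ξ ^ 2) ^ (s / (2:ℝ)) : ℝ)) : ℂ)‖ₑ = ENNReal.ofReal ((1 + ξ ^ 2) ^ (s / 2)) := by
    rw [← ofReal_norm_eq_enorm, Complex.norm_real, Real.norm_of_nonneg h1]
  rw [this, ← ENNReal.ofReal_pow h1]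
  congr 1
  rw [← Real.rpow_natCast ((1 + ξ ^ 2) ^ (s / 2)) 2, ← Real.rpow_mul h0]
  norm_num

lemma HsE_zero (G : ℝ → ℂ) : HsE 0 G = eLpNorm G 2 volume := by
  rw [HsE_eq]
  refine eLpNorm_congr_ae (Filter.Eventually.of_forall fun ξ => ?_)
  norm_num

lemma HsE_add_le {s : ℝ} {G H : ℝ → ℂ} (hG : AEStronglyMeasurable G volume)
    (hH : AEStronglyMeasurable H volume) :
    HsE s (fun ξ => G ξ + H ξ) ≤ HsE s G + HsE s H := by
  have hw : Continuous fun ξ : ℝ => (((1 + ξ ^ 2) ^ (s / 2) : ℝ) : ℂ) :=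
    Complex.continuous_ofReal.comp ((continuous_const.add (continuous_pow 2)).rpow_const
      (fun ξ : ℝ => Or.inl (by positivity : (1:ℝ) + ξ ^ 2 ≠ 0)))
  rw [HsE_eq, HsE_eq, HsE_eq]
  have heq : (fun ξ => (((1 + ξ ^ 2) ^ (s / 2) : ℝ) : ℂ) * (G ξ + H ξ))
      = (fun ξ => (((1 + ξ ^ 2) ^ (s / 2) : ℝ) : ℂ) * G ξ)
        + fun ξ => (((1 + ξ ^ 2) ^ (s / 2) : ℝ) : ℂ) * H ξ := by
    funext ξ; simp [mul_add]
  rw [heq]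
  exact eLpNorm_add_le (hw.aestronglyMeasurable.mul hG) (hw.aestronglyMeasurable.mul hH)
    (by norm_num)

lemma HsE_smul (s r : ℝ) (G : ℝ → ℂ) : HsE s (r • G) = (‖r‖₊ : ℝ≥0∞) * HsE s G := by
  rw [HsE_eq, HsE_eq]
  have heq : (fun ξ => (((1 + ξ ^ 2) ^ (s / 2) : ℝ) : ℂ) * (r • G) ξ)
      = r • fun ξ => (((1 + ξ ^ 2) ^ (s / 2) : ℝ) : ℂ) * G ξ := by
    funext ξ
    simp only [Pi.smul_apply, Complex.real_smul]
    ring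
  rw [heq, eLpNorm_const_smul]
  rfl

lemma HsE_resolv_le {ℓ : ℝ} (hl2 : ℓ ≤ 2) (h : ℝ → ℂ) :
    HsE ℓ (fun ξ => (((1 + ξ ^ 2)⁻¹ : ℝ) : ℂ) * h ξ) ≤ eLpNorm h 2 volume := by
  rw [← HsE_zero]
  unfold HsE
  refine ENNReal.rpow_le_rpow (lintegral_mono fun ξ => ?_) (by norm_num)
  have h0 : (0:ℝ) < 1 + ξ ^ 2 := by positivity
  have h1 : (1:ℝ) ≤ 1 + ξ ^ 2 := by nlinarith
  rw [nnnorm_mul, ENNReal.coe_mul, mul_pow, ← mul_assoc]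
  gcongr
  have hc : (‖(((1 + ξ ^ 2)⁻¹ : ℝ) : ℂ)‖₊ : ℝ≥0∞) = ENNReal.ofReal ((1 + ξ ^ 2)⁻¹ : ℝ) := by
    rw [Complex.nnnorm_real]
    exact Real.enorm_eq_ofReal (by positivity)
  rw [hc, ← ENNReal.ofReal_pow (by positivity), ← ENNReal.ofReal_mul (by positivity)]
  rw [Real.rpow_zero]
  refine ENNReal.ofReal_le_ofReal ?_
  have h2 : (1 + ξ ^ 2) ^ ℓ ≤ (1 + ξ ^ 2) ^ (2:ℝ) := Real.rpow_le_rpow_of_exponent_le h1 hl2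
  rw [show ((2:ℝ) = ((2:ℕ):ℝ)) by norm_num, Real.rpow_natCast] at h2
  rw [inv_pow, ← div_eq_mul_inv, div_le_one (by positivity)]
  exact h2

lemma resolv_coeFn (g : V) :
    (resolv g : ℝ → ℂ) =ᵐ[volume] fun ξ => (((1 + ξ ^ 2)⁻¹ : ℝ) : ℂ) * (g : ℝ → ℂ) ξ :=
  MemLp.coeFn_toLp _

lemma resolv_norm_le (g : V) : ‖resolv g‖ ≤ ‖g‖ := by
  rw [show resolv g = MemLp.toLp _ (memLp_resolventFun g) from rfl, Lp.norm_toLp, Lp.norm_def]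
  refine ENNReal.toReal_mono (Lp.eLpNorm_ne_top g) (eLpNorm_mono_ae ?_)
  filter_upwards with ξ
  have h0 : (0 : ℝ) < 1 + ξ ^ 2 := by positivity
  have h1 : ‖(((1 + ξ ^ 2)⁻¹ : ℝ) : ℂ)‖ ≤ 1 := by
    rw [Complex.norm_real, Real.norm_eq_abs, abs_of_pos (by positivity), inv_le_one_iff₀]
    right; nlinarith
  calc ‖(((1 + ξ ^ 2)⁻¹ : ℝ) : ℂ) * (g : ℝ → ℂ) ξ‖
      = ‖(((1 + ξ ^ 2)⁻¹ : ℝ) : ℂ)‖ * ‖(g : ℝ → ℂ) ξ‖ := norm_mul _ _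
    _ ≤ 1 * ‖(g : ℝ → ℂ) ξ‖ := by gcongr
    _ = ‖(g : ℝ → ℂ) ξ‖ := one_mul _

def resolvL : V →ₗ[ℂ] V where
  toFun := resolv
  map_add' g h := by
    refine MeasureTheory.Lp.ext ?_
    filter_upwards [resolv_coeFn (g + h), resolv_coeFn g, resolv_coeFn h,
      Lp.coeFn_add g h, Lp.coeFn_add (resolv g) (resolv h)] with ξ h1 h2 h3 h4 h5
    rw [h1, h5, Pi.add_apply, h2, h3, h4, Pi.add_apply, mul_add]
  map_smul' c g := by
    refine MeasureTheory.Lp.ext ?_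
    filter_upwards [resolv_coeFn (c • g), resolv_coeFn g, Lp.coeFn_smul c g,
      Lp.coeFn_smul c (resolv g)] with ξ h1 h2 h3 h4
    rw [RingHom.id_apply, h1, h3, h4, Pi.smul_apply, Pi.smul_apply, h2, smul_eq_mul, smul_eq_mul]
    ring

def resolvCLM : V →L[ℂ] V :=
  resolvL.mkContinuous 1 (fun g => by rw [one_mul]; exact resolv_norm_le g)

lemma resolvCLM_apply (g : V) : resolvCLM g = resolv g := rfl

lemma key_est {ℓ : ℝ} (hl2 : ℓ ≤ 2) (Φ : V) (F : ℝ → V) (hF : ContinuousOn F (Ici 0))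
    (M : ℝ≥0∞) (hM : M ≠ ⊤) (hFM : ∀ s ≥ (0:ℝ), eLpNorm (F s : ℝ → ℂ) 2 volume ≤ M)
    (t : ℝ) (ht : 0 ≤ t) :
    HsE ℓ ((Real.exp (-t) • Φ +
        ∫ s in (0 : ℝ)..t, Real.exp (-(t - s)) • resolv (F s) : V) : ℝ → ℂ)
      ≤ HsE ℓ (Φ : ℝ → ℂ) + M := by
  have hsc : Continuous fun s : ℝ => Real.exp (-(t - s)) :=
    Real.continuous_exp.comp (by continuity)
  have hFc : ContinuousOn F (uIcc 0 t) := by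
    rw [uIcc_of_le ht]
    exact hF.mono (fun x hx => hx.1)
  have hKint : IntervalIntegrable (fun s => Real.exp (-(t - s)) • F s) volume 0 t :=
    (hsc.continuousOn.smul hFc).intervalIntegrable
  set K : V := ∫ s in (0:ℝ)..t, Real.exp (-(t - s)) • F s with hKdef
  have hI : (∫ s in (0:ℝ)..t, Real.exp (-(t - s)) • resolv (F s)) = resolvCLM K := by
    rw [hKdef, ← ContinuousLinearMap.intervalIntegral_comp_comm resolvCLM hKint]
    refine intervalIntegral.integral_congr fun s _ => ?_
    rw [ContinuousLinearMap.map_smul_of_tower]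
    rfl
  rw [hI]
  have hcoe : ((Real.exp (-t) • Φ + resolvCLM K : V) : ℝ → ℂ)
      =ᵐ[volume] fun ξ => (Real.exp (-t) • (Φ : ℝ → ℂ)) ξ + ((resolvCLM K : V) : ℝ → ℂ) ξ := by
    filter_upwards [Lp.coeFn_add (Real.exp (-t) • Φ) (resolvCLM K),
      Lp.coeFn_smul (Real.exp (-t)) Φ] with ξ h1 h2
    rw [h1, Pi.add_apply, h2]
  rw [HsE_congr hcoe]
  refine le_trans (HsE_add_le ((Lp.aestronglyMeasurable Φ).const_smul _)
    (Lp.aestronglyMeasurable _)) (add_le_add ?_ ?_)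
  · rw [HsE_smul]
    have he : (‖Real.exp (-t)‖₊ : ℝ≥0∞) ≤ 1 := by
      rw [← ENNReal.coe_one, ENNReal.coe_le_coe, ← NNReal.coe_le_coe]
      simpa [Real.abs_exp] using Real.exp_le_one_iff.mpr (by linarith : (-t:ℝ) ≤ 0)
    calc (‖Real.exp (-t)‖₊ : ℝ≥0∞) * HsE ℓ (Φ : ℝ → ℂ)
        ≤ 1 * HsE ℓ (Φ : ℝ → ℂ) := by gcongr
      _ = HsE ℓ (Φ : ℝ → ℂ) := one_mul _
  · rw [resolvCLM_apply, HsE_congr (resolv_coeFn K)]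
    refine le_trans (HsE_resolv_le hl2 _) ?_
    have h1 : eLpNorm ((K : V) : ℝ → ℂ) 2 volume = ENNReal.ofReal ‖K‖ := by
      rw [Lp.norm_def, ENNReal.ofReal_toReal (Lp.eLpNorm_ne_top K)]
    rw [h1]
    have hKnorm : ‖K‖ ≤ M.toReal := by
      have int1 : IntervalIntegrable (fun s => ‖Real.exp (-(t - s)) • F s‖) volume 0 t :=
        hKint.norm
      have int2 : IntervalIntegrable (fun s => Real.exp (-(t - s)) * M.toReal) volume 0 t :=
        (hsc.mul continuous_const).intervalIntegrable 0 t
      calc ‖K‖ ≤ ∫ s in (0:ℝ)..t, ‖Real.exp (-(t - s)) • F s‖ :=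
            intervalIntegral.norm_integral_le_integral_norm ht
        _ ≤ ∫ s in (0:ℝ)..t, Real.exp (-(t - s)) * M.toReal := by
            refine intervalIntegral.integral_mono_on ht int1 int2 fun s hs => ?_
            rw [norm_smul, Real.norm_eq_abs, Real.abs_exp]
            gcongr
            rw [Lp.norm_def]
            exact ENNReal.toReal_mono hM (hFM s hs.1)
        _ = M.toReal * (1 - Real.exp (-t)) := by
            have heq : ∀ s ∈ uIcc (0:ℝ) t, Real.exp (-(t - s)) * M.toReal
                = M.toReal * (Real.exp (-t) * Real.exp s) := by
              intro s _
              rw [← Real.exp_add]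
              ring_nf
            rw [intervalIntegral.integral_congr heq, intervalIntegral.integral_const_mul,
              intervalIntegral.integral_const_mul, integral_exp]
            rw [Real.exp_zero]
            have : Real.exp (-t) * Real.exp t = 1 := by
              rw [← Real.exp_add]; simp
            linear_combination M.toReal * this
        _ ≤ M.toReal := by
            have h3 : (0:ℝ) < Real.exp (-t) := Real.exp_pos _
            have h4 : Real.exp (-t) ≤ 1 := Real.exp_le_one_iff.mpr (by linarith)
            have h5 : (0:ℝ) ≤ M.toReal := ENNReal.toReal_nonneg
            nlinarith
    calc ENNReal.ofReal ‖K‖ ≤ ENNReal.ofReal M.toReal := ENNReal.ofReal_le_ofReal hKnorm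
      _ = M := ENNReal.ofReal_toReal hM

/-- `Y^ℓ_{τ,T}` bound for the linear damped BBM evolution, with a constant
`C_T` independent of `φ`, `f` and the base point `τ`. -/
theorem stmt3 (ℓ : ℝ) (hl0 : 0 ≤ ℓ) (hl1 : ℓ < 1) :
    ∀ T > (0 : ℝ), ∃ C > (0 : ℝ),
      ∀ Φ : V, MemHs ℓ (Φ : ℝ → ℂ) →
      ∀ F : ℝ → V, ContinuousOn F (Ici 0) →
        (⨆ t ∈ Ici (0 : ℝ), eLpNorm (F t : ℝ → ℂ) 2 volume) < ⊤ →
      ∀ v : ℝ → V,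
        (∀ t : ℝ, v t = Real.exp (-t) • Φ +
          ∫ s in (0 : ℝ)..t, Real.exp (-(t - s)) • resolv (F s)) →
      ∀ τ ≥ (0 : ℝ),
        YE ℓ τ T (fun t => (v t : ℝ → ℂ)) ≤
          ENNReal.ofReal C *
            (HsE ℓ (Φ : ℝ → ℂ) + ⨆ t ∈ Ici (0 : ℝ), eLpNorm (F t : ℝ → ℂ) 2 volume) := by

  intro T hT
  refine ⟨1 + Real.sqrt T, by positivity, ?_⟩
  intro Φ hΦ F hF hM v hv τ hτ
  set M := ⨆ t ∈ Ici (0:ℝ), eLpNorm ((F t : V) : ℝ → ℂ) 2 volume with hMdef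
  have hMne : M ≠ ⊤ := hM.ne
  have hFM : ∀ s ≥ (0:ℝ), eLpNorm ((F s : V) : ℝ → ℂ) 2 volume ≤ M := fun s hs =>
    le_biSup (fun t => eLpNorm ((F t : V) : ℝ → ℂ) 2 volume) (show s ∈ Ici (0:ℝ) from hs)
  set B := HsE ℓ (Φ : ℝ → ℂ) + M with hBdef
  have key : ∀ t ∈ Icc τ (τ + T), HsE ℓ ((v t : V) : ℝ → ℂ) ≤ B := by
    intro t ht
    have ht0 : (0:ℝ) ≤ t := le_trans hτ ht.1
    rw [hv t]
    exact key_est (by linarith) Φ F hF M hMne hFM t ht0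
  have h1 : (⨆ t ∈ Icc τ (τ + T), HsE ℓ ((v t : V) : ℝ → ℂ)) ≤ B := iSup₂_le key
  have h2 : (∫⁻ t in Icc τ (τ + T), HsE ℓ ((v t : V) : ℝ → ℂ) ^ 2) ^ (1/2 : ℝ)
      ≤ B * ENNReal.ofReal (Real.sqrt T) := by
    have hint : (∫⁻ t in Icc τ (τ + T), HsE ℓ ((v t : V) : ℝ → ℂ) ^ 2)
        ≤ B ^ 2 * ENNReal.ofReal T := by
      calc (∫⁻ t in Icc τ (τ + T), HsE ℓ ((v t : V) : ℝ → ℂ) ^ 2)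
          ≤ ∫⁻ _ in Icc τ (τ + T), B ^ 2 :=
            setLIntegral_mono measurable_const fun t ht => by gcongr; exact key t ht
        _ = B ^ 2 * volume (Icc τ (τ + T)) := setLIntegral_const _ _
        _ = B ^ 2 * ENNReal.ofReal T := by rw [Real.volume_Icc, add_sub_cancel_left]
    calc (∫⁻ t in Icc τ (τ + T), HsE ℓ ((v t : V) : ℝ → ℂ) ^ 2) ^ (1/2 : ℝ)
        ≤ (B ^ 2 * ENNReal.ofReal T) ^ (1/2 : ℝ) := ENNReal.rpow_le_rpow hint (by norm_num)
      _ = B * ENNReal.ofReal (Real.sqrt T) := by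
          rw [ENNReal.mul_rpow_of_nonneg _ _ (by norm_num)]
          congr 1
          · rw [← ENNReal.rpow_natCast B 2, ← ENNReal.rpow_mul]
            norm_num
          · rw [Real.sqrt_eq_rpow]
            exact ENNReal.ofReal_rpow_of_pos hT
  calc YE ℓ τ T (fun t => ((v t : V) : ℝ → ℂ))
      ≤ B + B * ENNReal.ofReal (Real.sqrt T) := add_le_add h1 h2
    _ = (1 + ENNReal.ofReal (Real.sqrt T)) * B := by ring
    _ = ENNReal.ofReal (1 + Real.sqrt T) * B := by
        rw [ENNReal.ofReal_add zero_le_one (Real.sqrt_nonneg T), ENNReal.ofReal_one]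
    _ = ENNReal.ofReal (1 + Real.sqrt T) * (HsE ℓ (Φ : ℝ → ℂ) + M) := rfl
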